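/- arXiv:2512.23088 — 3 statements merged into one kernel-verified Lean document; each statement's English description precedes it below -/
import Mathlib

section
/- Let M be a doxastic Kripke model, w a world of M, and σ(M) the hypergraph model associated with M with hyperedge e_w corresponding to w. If M ∈ K^{TE}_n, then for all φ in the doxastic fragment L_B: M,w ⊨_k φ iff σ(M), e_w ⊨_h φ. If M ∈ K^{STE}_n, then for all φ ∈ L_KB: M,w ⊨_k φ iff σ(M), e_w ⊨_h φ. -/
namespace DoxHG

/-- Formulas of the epistemic-doxastic language `L_KB`. -/
inductive Form (Ag Atom : Type) : Type
  | atom : Atom → Form Ag Atom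
  | neg  : Form Ag Atom → Form Ag Atom
  | and  : Form Ag Atom → Form Ag Atom → Form Ag Atom
  | B    : Ag → Form Ag Atom → Form Ag Atom
  | K    : Ag → Form Ag Atom → Form Ag Atom

namespace Form

variable {Ag Atom : Type}

/-- φ ∨ ψ := ¬(¬φ ∧ ¬ψ) -/
def or (φ ψ : Form Ag Atom) : Form Ag Atom := .neg (.and (.neg φ) (.neg ψ))

/-- φ → ψ := ¬φ ∨ ψ -/
def imp (φ ψ : Form Ag Atom) : Form Ag Atom := Form.or (.neg φ) ψ

/-- φ ↔ ψ -/
def biimp (φ ψ : Form Ag Atom) : Form Ag Atom := .and (φ.imp ψ) (ψ.imp φ)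

/-- ⊥ := p ∧ ¬p for an arbitrary but fixed propositional variable p. -/
def bot [Inhabited Atom] : Form Ag Atom := .and (.atom default) (.neg (.atom default))

/-- Membership in the doxastic fragment `L_B` (no knowledge operators). -/
def noK : Form Ag Atom → Prop
  | .atom _  => True
  | .neg φ   => φ.noK
  | .and φ ψ => φ.noK ∧ ψ.noK
  | .B _ φ   => φ.noK
  | .K _ _   => False

/-- φ is an `a`-formula: all variables are local variables of `a` (as given by
`owner`) and all modal operators are `B a` or `K a`. -/
def isAFormula (owner : Atom → Ag) (a : Ag) : Form Ag Atom → Prop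
  | .atom p  => owner p = a
  | .neg φ   => φ.isAFormula owner a
  | .and φ ψ => φ.isAFormula owner a ∧ ψ.isAFormula owner a
  | .B b φ   => b = a ∧ φ.isAFormula owner a
  | .K b φ   => b = a ∧ φ.isAFormula owner a

end Form

/-- φ is (an instance of) a classical propositional tautology: it evaluates to
true under every boolean valuation that respects negation and conjunction
(treating atoms and modal formulas as opaque). -/
def Tautology {Ag Atom : Type} (φ : Form Ag Atom) : Prop :=
  ∀ v : Form Ag Atom → Bool,
    (∀ ψ, v (.neg ψ) = !v ψ) →
    (∀ ψ χ, v (.and ψ χ) = (v ψ && v χ)) →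
    v φ = true

/-! ### Doxastic Kripke models -/

/-- A doxastic Kripke model (with set of worlds the type `W`, assumed nonempty
where required): doxastic accessibility relations `B a` and valuation `V`. -/
structure KModel (Ag Atom W : Type) where
  B : Ag → W → W → Prop
  V : W → Set Atom

section Kripke

variable {Ag Atom W : Type}

/-- Kripke satisfaction `⊨ₖ`; `K a` is interpreted via the equivalence relation
generated by `B a` (i.e. `Relation.EqvGen`, the smallest equivalence relation
containing it). -/
def ksat (M : KModel Ag Atom W) : W → Form Ag Atom → Prop
  | w, .atom p  => p ∈ M.V w
  | w, .neg φ   => ¬ ksat M w φ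
  | w, .and φ ψ => ksat M w φ ∧ ksat M w ψ
  | w, .B a φ   => ∀ u, M.B a w u → ksat M u φ
  | w, .K a φ   => ∀ u, Relation.EqvGen (M.B a) w u → ksat M u φ

def KModel.Serial (M : KModel Ag Atom W) : Prop := ∀ (a : Ag) (w : W), ∃ u, M.B a w u

def KModel.Transit (M : KModel Ag Atom W) : Prop :=
  ∀ (a : Ag) (u v w : W), M.B a u v → M.B a v w → M.B a u w

def KModel.Eucl (M : KModel Ag Atom W) : Prop :=
  ∀ (a : Ag) (u v w : W), M.B a u v → M.B a u w → M.B a v w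

/-- Locality: worlds related by `B a ∪ (B a)⁻¹` agree on the local variables of `a`. -/
def KModel.Local (owner : Atom → Ag) (M : KModel Ag Atom W) : Prop :=
  ∀ (a : Ag) (u v : W), (M.B a u v ∨ M.B a v u) →
    M.V u ∩ {p | owner p = a} = M.V v ∩ {p | owner p = a}

/-- Properness: distinct worlds are distinguished by some agent. -/
def KModel.Proper (M : KModel Ag Atom W) : Prop :=
  ∀ u v : W, u ≠ v → ∃ a : Ag, ¬ Relation.EqvGen (M.B a) u v

end Kripke

/-! ### The Hilbert systems EDL, LocK45 and LocKD45 -/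

section ProofSystems

variable {Ag Atom : Type}

/-- Provability in the Hilbert system EDL. -/
inductive EDLProv (owner : Atom → Ag) : Form Ag Atom → Prop
  | taut {φ : Form Ag Atom} : Tautology φ → EDLProv owner φ
  | axKB (a : Ag) (φ ψ : Form Ag Atom) :
      EDLProv owner ((Form.B a (φ.imp ψ)).imp ((Form.B a φ).imp (Form.B a ψ)))
  | axDB (a : Ag) (φ : Form Ag Atom) :
      EDLProv owner (Form.neg (Form.B a (Form.and φ (Form.neg φ))))
  | ax4B (a : Ag) (φ : Form Ag Atom) :
      EDLProv owner ((Form.B a φ).imp (Form.B a (Form.B a φ)))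
  | ax5B (a : Ag) (φ : Form Ag Atom) :
      EDLProv owner ((Form.neg (Form.B a φ)).imp (Form.B a (Form.neg (Form.B a φ))))
  | axKK (a : Ag) (φ ψ : Form Ag Atom) :
      EDLProv owner ((Form.K a (φ.imp ψ)).imp ((Form.K a φ).imp (Form.K a ψ)))
  | axTK (a : Ag) (φ : Form Ag Atom) :
      EDLProv owner ((Form.K a φ).imp φ)
  | ax4K (a : Ag) (φ : Form Ag Atom) :
      EDLProv owner ((Form.K a φ).imp (Form.K a (Form.K a φ)))
  | ax5K (a : Ag) (φ : Form Ag Atom) :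
      EDLProv owner ((Form.neg (Form.K a φ)).imp (Form.K a (Form.neg (Form.K a φ))))
  | axPI (a : Ag) (φ : Form Ag Atom) :
      EDLProv owner ((Form.B a φ).imp (Form.K a (Form.B a φ)))
  | axNI (a : Ag) (φ : Form Ag Atom) :
      EDLProv owner ((Form.neg (Form.B a φ)).imp (Form.K a (Form.neg (Form.B a φ))))
  | axKIB (a : Ag) (φ : Form Ag Atom) :
      EDLProv owner ((Form.K a φ).imp (Form.B a φ))
  | axLoc (a : Ag) (p : Atom) (h : owner p = a) :
      EDLProv owner (Form.and ((Form.atom p).imp (Form.B a (Form.atom p)))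
        ((Form.neg (Form.atom p)).imp (Form.B a (Form.neg (Form.atom p)))))
  | mp {φ ψ : Form Ag Atom} :
      EDLProv owner (φ.imp ψ) → EDLProv owner φ → EDLProv owner ψ
  | nec (a : Ag) {φ : Form Ag Atom} : EDLProv owner φ → EDLProv owner (Form.K a φ)

/-- Provability in the Hilbert systems over the doxastic fragment `L_B`:
`BProv owner true` is LocKD45 (with axiom D_B) and `BProv owner false` is
LocK45 (without D_B). -/
inductive BProv (owner : Atom → Ag) (withD : Bool) : Form Ag Atom → Prop
  | taut {φ : Form Ag Atom} : φ.noK → Tautology φ → BProv owner withD φ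
  | axKB (a : Ag) {φ ψ : Form Ag Atom} (hφ : φ.noK) (hψ : ψ.noK) :
      BProv owner withD ((Form.B a (φ.imp ψ)).imp ((Form.B a φ).imp (Form.B a ψ)))
  | axDB (a : Ag) {φ : Form Ag Atom} (hD : withD = true) (hφ : φ.noK) :
      BProv owner withD (Form.neg (Form.B a (Form.and φ (Form.neg φ))))
  | ax4B (a : Ag) {φ : Form Ag Atom} (hφ : φ.noK) :
      BProv owner withD ((Form.B a φ).imp (Form.B a (Form.B a φ)))
  | ax5B (a : Ag) {φ : Form Ag Atom} (hφ : φ.noK) :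
      BProv owner withD ((Form.neg (Form.B a φ)).imp (Form.B a (Form.neg (Form.B a φ))))
  | axLoc (a : Ag) (p : Atom) (h : owner p = a) :
      BProv owner withD (Form.and ((Form.atom p).imp (Form.B a (Form.atom p)))
        ((Form.neg (Form.atom p)).imp (Form.B a (Form.neg (Form.atom p)))))
  | mp {φ ψ : Form Ag Atom} :
      BProv owner withD (φ.imp ψ) → BProv owner withD φ → BProv owner withD ψ
  | nec (a : Ag) {φ : Form Ag Atom} : BProv owner withD φ → BProv owner withD (Form.B a φ)

/-- Conjunction of a finite list of formulas (the empty conjunction is ¬⊥). -/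
def conj [Inhabited Atom] : List (Form Ag Atom) → Form Ag Atom
  | []        => Form.neg Form.bot
  | [φ]       => φ
  | φ :: rest => Form.and φ (conj rest)

/-- Γ ⊢ φ in EDL: some finite subset Δ ⊆ Γ has EDL ⊢ (⋀Δ) → φ. -/
def ProvFrom [Inhabited Atom] (owner : Atom → Ag) (Γ : Set (Form Ag Atom))
    (φ : Form Ag Atom) : Prop :=
  ∃ L : List (Form Ag Atom), (∀ ψ ∈ L, ψ ∈ Γ) ∧ EDLProv owner ((conj L).imp φ)

/-- Γ is EDL-consistent. -/
def EDLConsistent [Inhabited Atom] (owner : Atom → Ag) (Γ : Set (Form Ag Atom)) : Prop :=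
  ¬ ProvFrom owner Γ Form.bot

/-- Γ is maximally EDL-consistent. -/
def MaxEDLConsistent [Inhabited Atom] (owner : Atom → Ag) (Γ : Set (Form Ag Atom)) : Prop :=
  EDLConsistent owner Γ ∧ ∀ Δ : Set (Form Ag Atom), Γ ⊂ Δ → ¬ EDLConsistent owner Δ

end ProofSystems

/-! ### Directed hypergraph models -/

/-- The undirected hyperedge `ē = T(e) ∪ H(e)` induced by a directed hyperedge
`e = (T(e), H(e))`. -/
def ebar {V : Type} (e : Set V × Set V) : Set V := e.1 ∪ e.2

/-- A (directed) hypergraph model: a vertex set, a set of directed hyperedges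
(pairs (tail, head)), a coloring and a valuation.  Well-formedness conditions
are stated separately. -/
structure HModel (Ag Atom V : Type) where
  Vset : Set V
  E : Set (Set V × Set V)
  χ : V → Ag
  ℓ : V → Set Atom

namespace HModel

variable {Ag Atom V : Type}

/-- `(Vset, E)` is a directed hypergraph: the vertex set is nonempty and every
hyperedge consists of a finite tail and a finite head, disjoint from each
other, both made of vertices. -/
def IsHypergraph (M : HModel Ag Atom V) : Prop :=
  M.Vset.Nonempty ∧
    ∀ e ∈ M.E, e.1 ⊆ M.Vset ∧ e.2 ⊆ M.Vset ∧ e.1.Finite ∧ e.2.Finite ∧ Disjoint e.1 e.2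

/-- χ is a coloring: distinct vertices of the same hyperedge get distinct colors. -/
def IsChromatic (M : HModel Ag Atom V) : Prop :=
  ∀ e ∈ M.E, Set.InjOn M.χ (ebar e)

/-- The valuation assigns to an `a`-colored vertex only local variables of `a`. -/
def ValOk (owner : Atom → Ag) (M : HModel Ag Atom V) : Prop :=
  ∀ v ∈ M.Vset, M.ℓ v ⊆ {p | owner p = M.χ v}

/-- M is a (well-formed, chromatic) hypergraph model. -/
def IsModel (owner : Atom → Ag) (M : HModel Ag Atom V) : Prop :=
  M.IsHypergraph ∧ M.IsChromatic ∧ M.ValOk owner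

/-- Simplicity: for distinct hyperedges, `ē₁ ⊄ ē₂`. -/
def Simple (M : HModel Ag Atom V) : Prop :=
  ∀ e₁ ∈ M.E, ∀ e₂ ∈ M.E, e₁ ≠ e₂ → ¬ ebar e₁ ⊆ ebar e₂

/-- n-uniformity: every hyperedge has exactly `n` vertices. -/
def Uniform (M : HModel Ag Atom V) (n : ℕ) : Prop :=
  ∀ e ∈ M.E, (ebar e).ncard = n

/-- Tail-completeness: every vertex lies in the tail of some hyperedge. -/
def TailComplete (M : HModel Ag Atom V) : Prop :=
  ∀ v ∈ M.Vset, ∃ e ∈ M.E, v ∈ e.1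

end HModel

section HSemantics

variable {Ag Atom V : Type}

/-- The doxastic accessibility relation `B^G_a` between hyperedges:
some `a`-colored vertex lies in `ē₁ ∩ T(e₂)`. -/
def Bacc (M : HModel Ag Atom V) (a : Ag) (e₁ e₂ : Set V × Set V) : Prop :=
  ∃ u : V, M.χ u = a ∧ u ∈ ebar e₁ ∧ u ∈ e₂.1

/-- The epistemic accessibility relation `K^G_a` between hyperedges:
some `a`-colored vertex lies in `ē₁ ∩ ē₂`. -/
def Kacc (M : HModel Ag Atom V) (a : Ag) (e₁ e₂ : Set V × Set V) : Prop :=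
  ∃ u : V, M.χ u = a ∧ u ∈ ebar e₁ ∧ u ∈ ebar e₂

/-- `ℓ(e) = ⋃_{u ∈ ē} ℓ(u)`. -/
def elabel (M : HModel Ag Atom V) (e : Set V × Set V) : Set Atom :=
  ⋃ u ∈ ebar e, M.ℓ u

/-- Hypergraph satisfaction `⊨ₕ`. -/
def hsat (M : HModel Ag Atom V) : Set V × Set V → Form Ag Atom → Prop
  | e, .atom p  => p ∈ elabel M e
  | e, .neg φ   => ¬ hsat M e φ
  | e, .and φ ψ => hsat M e φ ∧ hsat M e ψ
  | e, .B a φ   => ∀ e' ∈ M.E, Bacc M a e e' → hsat M e' φ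
  | e, .K a φ   => ∀ e' ∈ M.E, Kacc M a e e' → hsat M e' φ

end HSemantics

end DoxHG

namespace DoxHG

section SigmaConv

variable {Ag Atom W : Type}

/-- The vertex `[x_u^a]`: the equivalence class of `x_u^a`, represented
concretely as the color tag `a` together with the `E(B_a)`-class of `u`. -/
def kcls (M : KModel Ag Atom W) (a : Ag) (u : W) : Ag × Set W :=
  (a, {v | Relation.EqvGen (M.B a) u v})

/-- The hyperedge `e_u = (X_u, Y_u)` associated with a world `u`. -/
def kedge (M : KModel Ag Atom W) (u : W) : Set (Ag × Set W) × Set (Ag × Set W) :=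
  ({x | ∃ a : Ag, M.B a u u ∧ x = kcls M a u},
   {x | ∃ a : Ag, ¬ M.B a u u ∧ x = kcls M a u})

/-- The hypergraph model `σ(M)` associated with a (local) doxastic Kripke model `M`. -/
def sigmaHM (owner : Atom → Ag) (M : KModel Ag Atom W) : HModel Ag Atom (Ag × Set W) where
  Vset := {x | ∃ (a : Ag) (u : W), x = kcls M a u}
  E := {e | ∃ u : W, e = kedge M u}
  χ := Prod.fst
  ℓ := fun x => {p : Atom | owner p = x.1 ∧ ∃ u ∈ x.2, p ∈ M.V u}

end SigmaConv

end DoxHG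

namespace DoxHG

section TruthLemma

variable {Ag Atom W : Type}

/-- In a transitive Euclidean relation, a reflexive point connected to `w`
(via the generated equivalence relation) is a successor of `w`. -/
lemma eqvgen_trans_eucl {R : W → W → Prop} (hT : ∀ u v w, R u v → R v w → R u w)
    (hE : ∀ u v w, R u v → R u w → R v w) {w u : W}
    (h : Relation.EqvGen R w u) (hu : R u u) : R w u := by
  have key : ∀ x y, Relation.EqvGen R x y →
      x = y ∨ ({z | R x z} = {z | R y z} ∧ ∃ z, R x z) := by
    intro x y h
    induction h with
    | rel x y hxy =>
      refine Or.inr ⟨?_, y, hxy⟩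
      ext z
      simp only [Set.mem_setOf_eq]
      exact ⟨fun hz => hE x y z hxy hz, fun hz => hT x y z hxy hz⟩
    | refl x => exact Or.inl rfl
    | symm x y _ ih =>
      rcases ih with rfl | ⟨hset, z, hz⟩
      · exact Or.inl rfl
      · exact Or.inr ⟨hset.symm, z, (Set.ext_iff.mp hset z).mp hz⟩
    | trans x y z _ _ ih1 ih2 =>
      rcases ih1 with rfl | ⟨h1, w1⟩
      · exact ih2
      rcases ih2 with rfl | ⟨h2, _⟩
      · exact Or.inr ⟨h1, w1⟩
      · exact Or.inr ⟨h1.trans h2, w1⟩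
  rcases key w u h with rfl | ⟨hset, -⟩
  · exact hu
  · exact (Set.ext_iff.mp hset u).mpr hu

lemma kcls_eq_iff (M : KModel Ag Atom W) (a : Ag) (w u : W) :
    kcls M a w = kcls M a u ↔ Relation.EqvGen (M.B a) w u := by
  constructor
  · intro h
    have h2 : {v | Relation.EqvGen (M.B a) w v} = {v | Relation.EqvGen (M.B a) u v} :=
      congrArg Prod.snd h
    exact (Set.ext_iff.mp h2 u).mpr (Relation.EqvGen.refl u)
  · intro h
    refine congrArg (Prod.mk a) (Set.ext fun v => ?_)
    simp only [Set.mem_setOf_eq]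
    exact ⟨fun hv => (h.symm).trans _ _ _ hv, fun hv => h.trans _ _ _ hv⟩

lemma mem_ebar_kedge (M : KModel Ag Atom W) (w : W) (x : Ag × Set W) :
    x ∈ ebar (kedge M w) ↔ ∃ a, x = kcls M a w := by
  simp only [ebar, kedge, Set.mem_union, Set.mem_setOf_eq]
  constructor
  · rintro (⟨a, -, rfl⟩ | ⟨a, -, rfl⟩) <;> exact ⟨a, rfl⟩
  · rintro ⟨a, rfl⟩
    by_cases h : M.B a w w
    · exact Or.inl ⟨a, h, rfl⟩
    · exact Or.inr ⟨a, h, rfl⟩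

lemma bacc_kedge (owner : Atom → Ag) (M : KModel Ag Atom W) (a : Ag) (w u : W) :
    Bacc (sigmaHM owner M) a (kedge M w) (kedge M u) ↔
      Relation.EqvGen (M.B a) w u ∧ M.B a u u := by
  constructor
  · rintro ⟨x, hχ, hx1, hx2⟩
    rw [mem_ebar_kedge] at hx1
    obtain ⟨b, rfl⟩ := hx1
    have hb : b = a := hχ
    subst hb
    obtain ⟨c, hc, heq⟩ := hx2
    have hcb : b = c := congrArg Prod.fst heq
    subst hcb
    exact ⟨(kcls_eq_iff M b w u).mp heq, hc⟩
  · rintro ⟨hwu, hu⟩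
    exact ⟨kcls M a w, rfl, (mem_ebar_kedge M w _).mpr ⟨a, rfl⟩,
      ⟨a, hu, (kcls_eq_iff M a w u).mpr hwu⟩⟩

lemma kacc_kedge (owner : Atom → Ag) (M : KModel Ag Atom W) (a : Ag) (w u : W) :
    Kacc (sigmaHM owner M) a (kedge M w) (kedge M u) ↔ Relation.EqvGen (M.B a) w u := by
  constructor
  · rintro ⟨x, hχ, hx1, hx2⟩
    rw [mem_ebar_kedge] at hx1
    rw [mem_ebar_kedge] at hx2
    obtain ⟨b, rfl⟩ := hx1
    obtain ⟨c, heq⟩ := hx2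
    have hb : b = a := hχ
    subst hb
    have hcb : b = c := congrArg Prod.fst heq
    subst hcb
    exact (kcls_eq_iff M b w u).mp heq
  · intro hwu
    exact ⟨kcls M a w, rfl, (mem_ebar_kedge M w _).mpr ⟨a, rfl⟩,
      (mem_ebar_kedge M u _).mpr ⟨a, (kcls_eq_iff M a w u).mpr hwu⟩⟩

lemma local_eqvgen (owner : Atom → Ag) (M : KModel Ag Atom W) (hLoc : M.Local owner)
    (a : Ag) {u v : W} (h : Relation.EqvGen (M.B a) u v) :
    M.V u ∩ {p | owner p = a} = M.V v ∩ {p | owner p = a} := by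
  induction h with
  | rel x y hxy => exact hLoc a x y (Or.inl hxy)
  | refl => rfl
  | symm _ _ _ ih => exact ih.symm
  | trans _ _ _ _ _ ih1 ih2 => exact ih1.trans ih2

lemma atom_iff (owner : Atom → Ag) (M : KModel Ag Atom W) (hLoc : M.Local owner)
    (w : W) (p : Atom) :
    p ∈ M.V w ↔ p ∈ elabel (sigmaHM owner M) (kedge M w) := by
  simp only [elabel, Set.mem_iUnion, exists_prop]
  constructor
  · intro hp
    exact ⟨kcls M (owner p) w, (mem_ebar_kedge M w _).mpr ⟨owner p, rfl⟩,
      rfl, w, Relation.EqvGen.refl w, hp⟩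
  · rintro ⟨x, hx, hp⟩
    rw [mem_ebar_kedge] at hx
    obtain ⟨a, rfl⟩ := hx
    obtain ⟨ho, u, hu, hpu⟩ := hp
    have hV := local_eqvgen owner M hLoc a hu
    have : p ∈ M.V w ∩ {q | owner q = a} := by rw [hV]; exact ⟨hpu, ho⟩
    exact this.1

lemma truth_lemma (owner : Atom → Ag) (M : KModel Ag Atom W)
    (hLoc : M.Local owner) (hT : M.Transit) (hEu : M.Eucl) :
    ∀ (φ : Form Ag Atom) (w : W),
      ksat M w φ ↔ hsat (sigmaHM owner M) (kedge M w) φ := by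
  intro φ
  induction φ with
  | atom p => intro w; exact atom_iff owner M hLoc w p
  | neg φ ih => intro w; exact not_congr (ih w)
  | and φ ψ ih1 ih2 => intro w; exact and_congr (ih1 w) (ih2 w)
  | B a φ ih =>
    intro w
    simp only [ksat, hsat]
    constructor
    · rintro h e' ⟨u, rfl⟩ hb
      rw [bacc_kedge] at hb
      exact (ih u).mp (h u (eqvgen_trans_eucl (hT a) (hEu a) hb.1 hb.2))
    · intro h u hwu
      exact (ih u).mpr (h (kedge M u) ⟨u, rfl⟩ ((bacc_kedge owner M a w u).mpr
        ⟨Relation.EqvGen.rel w u hwu, hEu a w u u hwu hwu⟩))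
  | K a φ ih =>
    intro w
    simp only [ksat, hsat]
    constructor
    · rintro h e' ⟨u, rfl⟩ hk
      rw [kacc_kedge] at hk
      exact (ih u).mp (h u hk)
    · intro h u hwu
      exact (ih u).mpr (h (kedge M u) ⟨u, rfl⟩ ((kacc_kedge owner M a w u).mpr hwu))

end TruthLemma

/-- For a doxastic Kripke model `M` with world `w` and the
associated hypergraph model `σ(M)` with hyperedge `e_w`:
if `M ∈ K^{TE}_n` then `M,w ⊨ₖ φ ↔ σ(M),e_w ⊨ₕ φ` for all `φ ∈ L_B`;
if `M ∈ K^{STE}_n` then the equivalence holds for all `φ ∈ L_KB`. -/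
theorem statement_17 {Ag Atom W : Type} [Fintype Ag] [Nonempty Ag] [Countable Atom] [Nonempty W]
    (owner : Atom → Ag) (M : KModel Ag Atom W) (w : W) :
    ((M.Local owner → M.Proper → M.Transit → M.Eucl →
        ∀ φ : Form Ag Atom, φ.noK →
          (ksat M w φ ↔ hsat (sigmaHM owner M) (kedge M w) φ)) ∧
     (M.Local owner → M.Proper → M.Serial → M.Transit → M.Eucl →
        ∀ φ : Form Ag Atom,
          ksat M w φ ↔ hsat (sigmaHM owner M) (kedge M w) φ)) := by
  constructor
  · intro hLoc _ hT hEu φ _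
    exact truth_lemma owner M hLoc hT hEu φ w
  · intro hLoc _ _ hT hEu φ
    exact truth_lemma owner M hLoc hT hEu φ w

end DoxHG
end

section
/- Let M be a hypergraph model and let κ(M) be the Kripke model associated with M. (i) If M is a simple and n-uniform hypergraph model (M ∈ H^{SU}_n), then κ(M) is a local, proper, transitive and Euclidean doxastic Kripke model (κ(M) ∈ K^{TE}_n). (ii) If M is a simple, n-uniform and tail-complete hypergraph model (M ∈ H^{SUT}_n), then κ(M) is a local, proper, serial, transitive and Euclidean doxastic Kripke model (κ(M) ∈ K^{STE}_n). -/
namespace DoxHG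

/-- The Kripke model `κ(M)` associated with a hypergraph model `M`:
the worlds are the hyperedges of `M`. -/
def kappaKM {Ag Atom V : Type} (M : HModel Ag Atom V) :
    KModel Ag Atom {e : Set V × Set V // e ∈ M.E} where
  B := fun a e₁ e₂ => Bacc M a e₁.1 e₂.1
  V := fun e => elabel M e.1

end DoxHG

namespace DoxHG

section Aux

variable {Ag Atom V : Type} [Fintype Ag] [Nonempty Ag]

/-- On a chromatic `n`-uniform hypergraph, every color occurs on every edge. -/
lemma surj_color (M : HModel Ag Atom V) (hch : M.IsChromatic)
    (hU : M.Uniform (Fintype.card Ag)) {e : Set V × Set V} (he : e ∈ M.E) (a : Ag) :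
    ∃ u ∈ ebar e, M.χ u = a := by
  have hinj := hch e he
  have hcard := hU e he
  have hfin : (ebar e).Finite := by
    by_contra h
    rw [Set.Infinite.ncard (by simpa using h)] at hcard
    exact (Fintype.card_pos (α := Ag)).ne hcard
  have himg : (M.χ '' ebar e).ncard = Fintype.card Ag := by
    rw [Set.ncard_image_of_injOn hinj, hcard]
  have huniv : (M.χ '' ebar e) = Set.univ := by
    apply Set.eq_of_subset_of_ncard_le (Set.subset_univ _) _ Set.finite_univ
    rw [himg, Set.ncard_univ, Nat.card_eq_fintype_card]
  have ha : a ∈ M.χ '' ebar e := huniv ▸ Set.mem_univ a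
  obtain ⟨u, hu, hua⟩ := ha
  exact ⟨u, hu, hua⟩

/-- The `a`-slice of `ℓ(e)` is `ℓ(u)` for any `a`-colored vertex `u ∈ ē`. -/
lemma label_slice (owner : Atom → Ag) (M : HModel Ag Atom V) (hM : M.IsModel owner)
    {e : Set V × Set V} (he : e ∈ M.E) {u : V} (hu : u ∈ ebar e) :
    elabel M e ∩ {p | owner p = M.χ u} = M.ℓ u := by
  obtain ⟨hH, hch, hval⟩ := hM
  have hsub : ebar e ⊆ M.Vset := by
    obtain ⟨h1, h2, _⟩ := (hH.2 e he)
    exact Set.union_subset h1 h2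
  ext p
  constructor
  · rintro ⟨hp, hpa⟩
    obtain ⟨w, hw, hpw⟩ : ∃ w ∈ ebar e, p ∈ M.ℓ w := by
      simpa [elabel] using hp
    have hcw : owner p = M.χ w := hval w (hsub hw) hpw
    have : w = u := hch e he hw hu (by rw [← hcw, hpa])
    rwa [← this]
  · intro hp
    refine ⟨?_, hval u (hsub hu) hp⟩
    simp only [elabel, Set.mem_iUnion]
    exact ⟨u, hu, hp⟩

/-- `EqvGen (Bacc a)` on edges forces agreement of the `a`-vertex. -/
lemma eqvgen_avertex (M : HModel Ag Atom V) (hch : M.IsChromatic)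
    (hU : M.Uniform (Fintype.card Ag)) (a : Ag)
    {e₁ e₂ : {e : Set V × Set V // e ∈ M.E}}
    (h : Relation.EqvGen ((kappaKM M).B a) e₁ e₂) :
    ∀ u v : V, u ∈ ebar e₁.1 → M.χ u = a → v ∈ ebar e₂.1 → M.χ v = a → u = v := by
  induction h with
  | rel x y hxy =>
      obtain ⟨w, hwa, hw1, hw2⟩ := hxy
      intro u v hu hua hv hva
      have h1 : u = w := hch x.1 x.2 hu hw1 (by rw [hua, hwa])
      have h2 : v = w := hch y.1 y.2 hv (Set.mem_union_left _ hw2) (by rw [hva, hwa])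
      rw [h1, h2]
  | refl x =>
      intro u v hu hua hv hva
      exact hch x.1 x.2 hu hv (by rw [hua, hva])
  | symm x y _ ih =>
      intro u v hu hua hv hva
      exact (ih v u hv hva hu hua).symm
  | trans x y z hxy _ ihxy ihyz =>
      intro u v hu hua hv hva
      obtain ⟨w, hw, hwa⟩ := surj_color M hch hU y.2 a
      exact (ihxy u w hu hua hw hwa).trans (ihyz w v hw hwa hv hva)

end Aux

/-- Let `M` be a hypergraph model.
(i) If `M ∈ H^{SU}_n` (simple, `n`-uniform), then `κ(M)` is a local, proper,
transitive and Euclidean doxastic Kripke model.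
(ii) If `M ∈ H^{SUT}_n` (simple, `n`-uniform, tail-complete), then `κ(M)` is a
local, proper, serial, transitive and Euclidean doxastic Kripke model. -/
theorem statement_18 {Ag Atom V : Type} [Fintype Ag] [Nonempty Ag] [Countable Atom]
    (owner : Atom → Ag) (M : HModel Ag Atom V) (hM : M.IsModel owner) :
    ((M.Simple → M.Uniform (Fintype.card Ag) →
        (kappaKM M).Local owner ∧ (kappaKM M).Proper ∧
          (kappaKM M).Transit ∧ (kappaKM M).Eucl) ∧
     (M.Simple → M.Uniform (Fintype.card Ag) → M.TailComplete →
        (kappaKM M).Local owner ∧ (kappaKM M).Proper ∧ (kappaKM M).Serial ∧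
          (kappaKM M).Transit ∧ (kappaKM M).Eucl)) := by
  obtain ⟨hH, hch, hval⟩ := hM
  -- Locality
  have hLoc : M.Simple → M.Uniform (Fintype.card Ag) → (kappaKM M).Local owner := by
    intro _ _ a e₁ e₂ hB
    show elabel M e₁.1 ∩ _ = elabel M e₂.1 ∩ _
    rcases hB with ⟨u, hua, hu1, hu2⟩ | ⟨u, hua, hu1, hu2⟩
    · have h1 := label_slice owner M ⟨hH, hch, hval⟩ e₁.2 hu1
      have h2 := label_slice owner M ⟨hH, hch, hval⟩ e₂.2 (Set.mem_union_left _ hu2)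
      rw [hua] at h1 h2
      rw [h1, h2]
    · have h1 := label_slice owner M ⟨hH, hch, hval⟩ e₂.2 hu1
      have h2 := label_slice owner M ⟨hH, hch, hval⟩ e₁.2 (Set.mem_union_left _ hu2)
      rw [hua] at h1 h2
      rw [h1, h2]
  -- Properness
  have hProp : M.Simple → M.Uniform (Fintype.card Ag) → (kappaKM M).Proper := by
    intro hS hU e₁ e₂ hne
    have hne' : e₁.1 ≠ e₂.1 := fun h => hne (Subtype.ext h)
    have hnsub : ¬ ebar e₁.1 ⊆ ebar e₂.1 := hS e₁.1 e₁.2 e₂.1 e₂.2 hne'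
    obtain ⟨u, hu1, hu2⟩ := Set.not_subset.mp hnsub
    refine ⟨M.χ u, fun hEq => ?_⟩
    obtain ⟨v, hv, hva⟩ := surj_color M hch hU e₂.2 (M.χ u)
    have := eqvgen_avertex M hch hU (M.χ u) hEq u v hu1 rfl hv hva
    exact hu2 (this ▸ hv)
  -- Transitivity
  have hTrans : M.Uniform (Fintype.card Ag) → (kappaKM M).Transit := by
    intro _ a e₁ e₂ e₃ h12 h23
    obtain ⟨u, hua, hu1, hu2⟩ := h12
    obtain ⟨v, hva, hv1, hv2⟩ := h23
    have : u = v := hch e₂.1 e₂.2 (Set.mem_union_left _ hu2) hv1 (by rw [hua, hva])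
    exact ⟨u, hua, hu1, this ▸ hv2⟩
  -- Euclideanness
  have hEucl : M.Uniform (Fintype.card Ag) → (kappaKM M).Eucl := by
    intro _ a e₁ e₂ e₃ h12 h13
    obtain ⟨u, hua, hu1, hu2⟩ := h12
    obtain ⟨v, hva, hv1, hv2⟩ := h13
    have : v = u := hch e₁.1 e₁.2 hv1 hu1 (by rw [hua, hva])
    exact ⟨u, hua, Set.mem_union_left _ hu2, this ▸ hv2⟩
  -- Seriality
  have hSer : M.Uniform (Fintype.card Ag) → M.TailComplete → (kappaKM M).Serial := by
    intro hU hT a e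
    obtain ⟨u, hu, hua⟩ := surj_color M hch hU e.2 a
    have huV : u ∈ M.Vset := by
      obtain ⟨h1, h2, _⟩ := hH.2 e.1 e.2
      exact (Set.union_subset h1 h2) hu
    obtain ⟨e', he', hue'⟩ := hT u huV
    exact ⟨⟨e', he'⟩, u, hua, hu, hue'⟩
  exact ⟨fun hS hU => ⟨hLoc hS hU, hProp hS hU, hTrans hU, hEucl hU⟩,
         fun hS hU hT => ⟨hLoc hS hU, hProp hS hU, hSer hU hT, hTrans hU, hEucl hU⟩⟩

end DoxHG
end

section
/- Let M be a hypergraph model, e a hyperedge of M, and κ(M) the Kripke model associated with M. If M ∈ H^{SU}_n, then for all φ in the doxastic fragment L_B: M,e ⊨_h φ iff κ(M), e ⊨_k φ. If M ∈ H^{SUT}_n, then for all φ ∈ L_KB: M,e ⊨_h φ iff κ(M), e ⊨_k φ. -/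
namespace DoxHG

/-- Every agent has a vertex in every hyperedge of a uniform chromatic model. -/
lemma exists_vertex {Ag Atom V : Type} [Fintype Ag] (owner : Atom → Ag)
    (M : HModel Ag Atom V) (hM : M.IsModel owner) (hU : M.Uniform (Fintype.card Ag))
    (a : Ag) (e : Set V × Set V) (he : e ∈ M.E) :
    ∃ u, M.χ u = a ∧ u ∈ ebar e := by
  obtain ⟨hH, hChr, _⟩ := hM
  obtain ⟨_, _, hfin1, hfin2, _⟩ := hH.2 e he
  have hfin : (ebar e).Finite := hfin1.union hfin2
  have hinj : Set.InjOn M.χ (ebar e) := hChr e he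
  have himg : (M.χ '' ebar e).ncard = Fintype.card Ag := by
    rw [Set.ncard_image_of_injOn hinj]; exact hU e he
  have hsub : M.χ '' ebar e ⊆ Set.univ := Set.subset_univ _
  have : M.χ '' ebar e = Set.univ := by
    apply Set.eq_of_subset_of_ncard_le hsub _ (Set.finite_univ)
    rw [Set.ncard_univ, Nat.card_eq_fintype_card, himg]
  have : a ∈ M.χ '' ebar e := by rw [this]; trivial
  obtain ⟨u, hu, hχ⟩ := this
  exact ⟨u, hχ, hu⟩

/-- Under SUT assumptions, `K^G_a` coincides with the equivalence relation
generated by `B_a` on `κ(M)`. -/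
lemma kacc_iff_eqvGen {Ag Atom V : Type} [Fintype Ag] (owner : Atom → Ag)
    (M : HModel Ag Atom V) (hM : M.IsModel owner) (hU : M.Uniform (Fintype.card Ag))
    (hT : M.TailComplete) (a : Ag) (e₁ e₂ : {e : Set V × Set V // e ∈ M.E}) :
    Kacc M a e₁.1 e₂.1 ↔ Relation.EqvGen ((kappaKM M).B a) e₁ e₂ := by
  constructor
  · rintro ⟨u, hχ, h1, h2⟩
    have huV : u ∈ M.Vset := by
      obtain ⟨hsub1, hsub2, _⟩ := hM.1.2 e₂.1 e₂.2
      rcases h2 with h | h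
      · exact hsub1 h
      · exact hsub2 h
    obtain ⟨e₃, he₃, hu3⟩ := hT u huV
    refine Relation.EqvGen.trans _ ⟨e₃, he₃⟩ _ ?_ ?_
    · exact Relation.EqvGen.rel _ _ ⟨u, hχ, h1, hu3⟩
    · exact Relation.EqvGen.symm _ _ (Relation.EqvGen.rel _ _ ⟨u, hχ, h2, hu3⟩)
  · intro h
    induction h with
    | rel x y hxy =>
        obtain ⟨u, hχ, h1, h2⟩ := hxy
        exact ⟨u, hχ, h1, Or.inl h2⟩
    | refl x =>
        obtain ⟨u, hχ, hu⟩ := exists_vertex owner M hM hU a x.1 x.2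
        exact ⟨u, hχ, hu, hu⟩
    | symm x y _ ih =>
        obtain ⟨u, hχ, h1, h2⟩ := ih
        exact ⟨u, hχ, h2, h1⟩
    | trans x y z _ _ ih1 ih2 =>
        obtain ⟨u, hχu, hu1, hu2⟩ := ih1
        obtain ⟨v, hχv, hv2, hv3⟩ := ih2
        have hinj : Set.InjOn M.χ (ebar y.1) := hM.2.1 y.1 y.2
        have huv : u = v := hinj hu2 hv2 (hχu.trans hχv.symm)
        exact ⟨u, hχu, hu1, huv ▸ hv3⟩

/-- For a hypergraph model `M` with hyperedge `e` and the
associated Kripke model `κ(M)`: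
if `M ∈ H^{SU}_n` then `M,e ⊨ₕ φ ↔ κ(M),e ⊨ₖ φ` for all `φ ∈ L_B`;
if `M ∈ H^{SUT}_n` then the equivalence holds for all `φ ∈ L_KB`. -/
theorem statement_19 {Ag Atom V : Type} [Fintype Ag] [Nonempty Ag] [Countable Atom]
    (owner : Atom → Ag) (M : HModel Ag Atom V) (e : {e : Set V × Set V // e ∈ M.E}) :
    ((M.IsModel owner → M.Simple → M.Uniform (Fintype.card Ag) →
        ∀ φ : Form Ag Atom, φ.noK →
          (hsat M e.1 φ ↔ ksat (kappaKM M) e φ)) ∧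
     (M.IsModel owner → M.Simple → M.Uniform (Fintype.card Ag) → M.TailComplete →
        ∀ φ : Form Ag Atom,
          hsat M e.1 φ ↔ ksat (kappaKM M) e φ)) := by
  constructor
  · intro hM _ hU φ hφ
    revert hφ
    induction φ generalizing e with
    | atom p => exact fun _ => Iff.rfl
    | neg φ ih => exact fun hφ => not_congr (ih e hφ)
    | and φ ψ ihφ ihψ => exact fun hφ => and_congr (ihφ e hφ.1) (ihψ e hφ.2)
    | B a φ ih =>
        intro hφ
        constructor
        · intro h u hu
          exact (ih u hφ).1 (h u.1 u.2 hu)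
        · intro h e' he' hB
          exact (ih ⟨e', he'⟩ hφ).2 (h ⟨e', he'⟩ hB)
    | K a φ ih => exact fun hφ => hφ.elim
  · intro hM _ hU hT φ
    induction φ generalizing e with
    | atom p => exact Iff.rfl
    | neg φ ih => exact not_congr (ih e)
    | and φ ψ ihφ ihψ => exact and_congr (ihφ e) (ihψ e)
    | B a φ ih =>
        constructor
        · intro h u hu
          exact (ih u).1 (h u.1 u.2 hu)
        · intro h e' he' hB
          exact (ih ⟨e', he'⟩).2 (h ⟨e', he'⟩ hB)
    | K a φ ih =>
        constructor
        · intro h u hu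
          exact (ih u).1 (h u.1 u.2
            ((kacc_iff_eqvGen owner M hM hU hT a e u).2 hu))
        · intro h e' he' hK
          exact (ih ⟨e', he'⟩).2 (h ⟨e', he'⟩
            ((kacc_iff_eqvGen owner M hM hU hT a e ⟨e', he'⟩).1 hK))

end DoxHG
end
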